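/- arXiv:2602.12220 — 9 statements merged into one kernel-verified Lean document; each statement's English description precedes it below -/
import Mathlib

section
/- For all natural numbers m and r with r ≤ m, the following identity holds: ∑_{i=1}^{r+1} 2^{2(i−1)} · C(m, 2(i−1)) · C(m − 2(i−1), r − i + 1) = C(2m, 2r). (This expresses that the subfile types of the pair-grouping PT design, where type v_i consists of the (2m−2r)-subsets meeting exactly 2(i−1) of the m pairs in one point and missing exactly r−i+1 pairs, partition all (2m−2r)-subsets of a 2m-element set.) -/
open Polynomial Finset

/-!
Write `(1 + X)^(2m) = ((1 + X)^2)^m = (2X + (1 + X^2))^m` and expand binomially. The summand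
`C(m, k) (2X)^k (1 + X^2)^(m-k)` involves only powers of `X` of the parity of `k`, so the
coefficient of `X^(2r)` collects just the even `k = 2j ≤ 2r`, each contributing
`4^j C(m, 2j) C(m - 2j, r - j)`.
-/

theorem Polynomial.coeff_X_pow_mul_expand_two {R : Type*} [CommSemiring R] (q : R[X]) (k n : ℕ) :
    (X ^ k * expand R 2 q).coeff n = if k ≤ n ∧ 2 ∣ n - k then q.coeff ((n - k) / 2) else 0 := by
  rw [coeff_X_pow_mul', coeff_expand two_pos, ite_and]

theorem Polynomial.one_add_X_sq_eq_C_two_mul_X_add_expand (R : Type*) [CommSemiring R] :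
    (1 + X : R[X]) ^ 2 = C 2 * X + expand R 2 (1 + X) := by
  simp only [map_add, map_one, expand_X, C_ofNat]; ring

theorem Nat.choose_two_mul_eq_sum (m n : ℕ) :
    (2 * m).choose n = ∑ k ∈ range (m + 1),
      if k ≤ n ∧ 2 ∣ n - k then 2 ^ k * m.choose k * (m - k).choose ((n - k) / 2) else 0 := by
  have h := coeff_one_add_X_pow ℕ (2 * m) n
  rw [Nat.cast_id] at h
  rw [← h, pow_mul, one_add_X_sq_eq_C_two_mul_X_add_expand, (Commute.all _ _).add_pow,
    finsetSum_coeff]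
  refine sum_congr rfl fun k _ => ?_
  rw [mul_pow, ← C_pow, ← map_pow, ← C_eq_natCast, coeff_mul_C, mul_assoc, coeff_C_mul,
    coeff_X_pow_mul_expand_two, coeff_one_add_X_pow]
  simp only [Nat.cast_id]
  split_ifs <;> ring

theorem Nat.choose_two_mul_two_mul (m r : ℕ) :
    (2 * m).choose (2 * r) =
      ∑ j ∈ range (r + 1), 4 ^ j * m.choose (2 * j) * (m - 2 * j).choose (r - j) := by
  have term_eq : ∀ j ≤ r, 4 ^ j * m.choose (2 * j) * (m - 2 * j).choose (r - j) =
      2 ^ (2 * j) * m.choose (2 * j) * (m - 2 * j).choose ((2 * r - 2 * j) / 2) := by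
    intro j hj
    rw [pow_mul, show (2 * r - 2 * j) / 2 = r - j by omega]
    norm_num
  rw [choose_two_mul_eq_sum]
  symm
  refine sum_bij_ne_zero (fun j _ _ => 2 * j) ?_ (fun a _ _ b _ _ h => by omega) ?_ ?_
  · intro j _ hj
    have hjm : 2 * j ≤ m := by
      by_contra! hm
      simp [Nat.choose_eq_zero_of_lt hm] at hj
    simpa [Nat.lt_succ_iff] using hjm
  · intro k _ hk
    obtain ⟨hkr, j, hj⟩ : k ≤ 2 * r ∧ 2 ∣ 2 * r - k := by
      by_contra h
      simp [h] at hk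
    obtain rfl : k = 2 * (r - j) := by omega
    refine ⟨r - j, by simp only [mem_range]; omega, ?_, rfl⟩
    rwa [if_pos ⟨hkr, j, hj⟩, ← term_eq _ (by omega)] at hk
  · intro j hj _
    rw [mem_range] at hj
    rw [term_eq j (by omega), if_pos ⟨by omega, r - j, by omega⟩]

theorem stmt_0_general (m r : ℕ) :
    ∑ i ∈ Finset.Icc 1 (r + 1),
        2 ^ (2 * (i - 1)) * Nat.choose m (2 * (i - 1)) *
          Nat.choose (m - 2 * (i - 1)) (r + 1 - i)
      = Nat.choose (2 * m) (2 * r) := by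
  rw [Nat.choose_two_mul_two_mul, ← Ico_add_one_right_eq_Icc, sum_Ico_eq_sum_range]
  refine sum_congr rfl fun j _ => ?_
  rw [pow_mul, add_tsub_cancel_left, add_comm 1 j, Nat.add_sub_add_right]
  norm_num

/-- The subfile types of the pair-grouping PT design partition all `(2m-2r)`-subsets
of a `2m`-element set:
`∑_{i=1}^{r+1} 2^{2(i−1)} · C(m, 2(i−1)) · C(m − 2(i−1), r − i + 1) = C(2m, 2r)`. -/
theorem stmt_0 (m r : ℕ) (h : r ≤ m) :
    ∑ i ∈ Finset.Icc 1 (r + 1),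
        2 ^ (2 * (i - 1)) * Nat.choose m (2 * (i - 1)) *
          Nat.choose (m - 2 * (i - 1)) (r + 1 - i)
      = Nat.choose (2 * m) (2 * r) :=
  stmt_0_general m r
end

section
/- Let C > 0 be a real number and let t̄ : ℕ → ℕ be a function such that for all sufficiently large K: t̄(K) is even, 2 ≤ t̄(K) < K, and t̄(K) ≤ C · log₂(log₂ K). Then the real sequence K ↦ (∏_{i=1}^{t̄(K)/2}(2i−1)) / (K − t̄(K)) converges to 0 as K → ∞. -/
/-!
Bounding each of the `t/2` odd factors by `t < 2^t` gives `∏ (2i-1) ≤ 2^(t²)`, and `t ≤ 2^(t²)`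
as well. With `t ≤ C log₂ log₂ K`, the common bound `B = 2^((C log₂ log₂ K)²)` satisfies
`log₂ (B / K) = (C log₂ L)² - L` for `L = log₂ K`, which tends to `-∞` because `(log L)² = o(L)`.
So eventually `t ≤ B ≤ K / 2`, and the ratio is at most `2 B / K → 0`.
-/

open Filter Topology Real

theorem prod_Icc_two_mul_sub_one_le_two_pow_sq (t : ℕ) :
    ∏ i ∈ Finset.Icc 1 (t / 2), (2 * i - 1) ≤ 2 ^ (t ^ 2) :=
  calc ∏ i ∈ Finset.Icc 1 (t / 2), (2 * i - 1)
      ≤ (2 ^ t) ^ (Finset.Icc 1 (t / 2)).card := by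
        refine Finset.prod_le_pow_card _ _ _ fun i hi => ?_
        have := Nat.lt_two_pow_self (n := t)
        simp only [Finset.mem_Icc] at hi
        omega
    _ ≤ (2 ^ t) ^ t := Nat.pow_le_pow_right (Nat.two_pow_pos t) (by simp; omega)
    _ = 2 ^ (t ^ 2) := by rw [← pow_mul, sq]

theorem self_le_two_pow_sq (t : ℕ) : t ≤ 2 ^ (t ^ 2) :=
  Nat.lt_two_pow_self.le.trans (Nat.pow_le_pow_right two_pos (Nat.le_self_pow two_ne_zero t))

theorem Real.tendsto_mul_log_sq_sub_atBot (c : ℝ) :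
    Tendsto (fun x => c * log x ^ 2 - x) atTop atBot := by
  have hratio : Tendsto (fun x => c * (log x ^ 2 / x) - 1) atTop (𝓝 (-1)) := by
    simpa using
      ((isLittleO_pow_log_id_atTop (n := 2)).tendsto_div_nhds_zero.const_mul c).sub_const 1
  refine (hratio.neg_mul_atTop (by norm_num) tendsto_id).congr' ?_
  filter_upwards [eventually_gt_atTop 0] with x hx
  simp only [id]
  field_simp

theorem tendsto_two_rpow_sq_logb_logb_div (C : ℝ) :
    Tendsto (fun x : ℝ => (2 : ℝ) ^ ((C * logb 2 (logb 2 x)) ^ 2) / x) atTop (𝓝 0) := by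
  have hexp : Tendsto (fun L => (C * logb 2 L) ^ 2 - L) atTop atBot := by
    refine (tendsto_mul_log_sq_sub_atBot ((C / log 2) ^ 2)).congr fun L => ?_
    rw [logb]
    ring
  refine ((tendsto_rpow_atBot_of_base_gt_one 2 one_lt_two).comp
    (hexp.comp (tendsto_logb_atTop one_lt_two))).congr' ?_
  filter_upwards [eventually_gt_atTop 0] with x hx
  simp only [Function.comp, rpow_sub two_pos, rpow_logb two_pos (by norm_num) hx]

theorem div_sub_le_two_mul_div {P t K B : ℝ} (hP : 0 ≤ P) (hPB : P ≤ B) (htB : t ≤ B)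
    (hK : 0 < K) (hBK : B / K ≤ 1 / 2) : P / (K - t) ≤ 2 * (B / K) := by
  have hB : B ≤ K / 2 := by rwa [div_le_iff₀ hK, one_div_mul_eq_div] at hBK
  calc P / (K - t) ≤ B / (K / 2) := div_le_div₀ (hP.trans hPB) hPB (by positivity) (by linarith)
    _ = 2 * (B / K) := by field_simp

theorem stmt_4_general (C : ℝ) (tb : ℕ → ℕ)
    (h : ∃ N : ℕ, ∀ K : ℕ, N ≤ K →
      Even (tb K) ∧ 2 ≤ tb K ∧ tb K < K ∧
      (tb K : ℝ) ≤ C * Real.logb 2 (Real.logb 2 (K : ℝ))) :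
    Tendsto
      (fun K : ℕ =>
        ((∏ i ∈ Finset.Icc 1 (tb K / 2), (2 * i - 1) : ℕ) : ℝ) / ((K : ℝ) - (tb K : ℝ)))
      atTop (𝓝 0) := by
  obtain ⟨N, hN⟩ := h
  set B : ℕ → ℝ := fun K => (2 : ℝ) ^ ((C * logb 2 (logb 2 (K : ℝ))) ^ 2)
  have hB : Tendsto (fun K : ℕ => B K / K) atTop (𝓝 0) :=
    (tendsto_two_rpow_sq_logb_logb_div C).comp tendsto_natCast_atTop_atTop
  refine squeeze_zero' ?_ ?_ (by simpa using hB.const_mul 2)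
  · filter_upwards [eventually_ge_atTop N] with K hK
    have : (tb K : ℝ) < K := by exact_mod_cast (hN K hK).2.2.1
    exact div_nonneg (Nat.cast_nonneg _) (sub_nonneg.2 this.le)
  · filter_upwards [eventually_ge_atTop N, hB.eventually (ge_mem_nhds one_half_pos),
      eventually_gt_atTop 0] with K hK hBK hK0
    have hpow : ((2 ^ (tb K ^ 2) : ℕ) : ℝ) ≤ B K := by
      rw [Nat.cast_pow, Nat.cast_ofNat, ← rpow_natCast, Nat.cast_pow]
      exact rpow_le_rpow_of_exponent_le one_le_two
        (pow_le_pow_left₀ (Nat.cast_nonneg _) (hN K hK).2.2.2 2)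
    refine div_sub_le_two_mul_div (Nat.cast_nonneg _) ?_ ?_ (by exact_mod_cast hK0) hBK
    · exact (Nat.cast_le.2 (prod_Icc_two_mul_sub_one_le_two_pow_sq _)).trans hpow
    · exact (Nat.cast_le.2 (self_le_two_pow_sq _)).trans hpow

/-- Vanishing subpacketization ratio (Lemma 1): if `t̄(K)` is even, `2 ≤ t̄(K) < K`,
and `t̄(K) ≤ C·log₂ log₂ K` for all sufficiently large `K`, then
`(∏_{i=1}^{t̄(K)/2}(2i−1)) / (K − t̄(K)) → 0` as `K → ∞`. -/
theorem stmt_4 (C : ℝ) (hC : 0 < C) (tb : ℕ → ℕ)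
    (h : ∃ N : ℕ, ∀ K : ℕ, N ≤ K →
      Even (tb K) ∧ 2 ≤ tb K ∧ tb K < K ∧
      (tb K : ℝ) ≤ C * Real.logb 2 (Real.logb 2 (K : ℝ))) :
    Tendsto
      (fun K : ℕ =>
        ((∏ i ∈ Finset.Icc 1 (tb K / 2), (2 * i - 1) : ℕ) : ℝ) / ((K : ℝ) - (tb K : ℝ)))
      atTop (𝓝 0) :=
  stmt_4_general C tb h
end

section
/- Let m, q ≥ 2 be natural numbers and K = mq. Then (q−2) · m · C(q,2) + (q−1) · C(m,2) · q² = K(q−1)(K−2)/2. Consequently, among all factorizations K = mq with m, q ≥ 2, the quantity K(q−1)(K−2)/2 is minimized exactly at q = 2, where it equals K(K−2)/2; moreover, dividing it by F_JCM = (K−2) · C(K, K−2) yields the ratio (q−1)/(K−1). -/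
/-! Doubling clears the binomials: `2·F_PT = mq(q−1)((q−2) + (m−1)q) = K(q−1)(K−2)`, which also
shows that `K(q−1)(K−2)` is even, so the division by 2 is exact. The value then depends on the
grouping only through the factor `q − 1 ≥ 1`, and `F_JCM = (K−2)·K(K−1)/2` shares the factor
`K(K−2)/2` with it. -/

/-- The subpacketization `F_PT(q)` of the PT design with `t̄ = 2` for `m` groups of size `q`. -/
def ptSubpacketization (m q : ℕ) : ℕ :=
  (q - 2) * m * q.choose 2 + (q - 1) * m.choose 2 * q ^ 2

theorem two_mul_ptSubpacketization (m q : ℕ) :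
    2 * ptSubpacketization m q = m * q * (q - 1) * (m * q - 2) := by
  rcases Nat.eq_zero_or_pos m with rfl | hm
  · simp [ptSubpacketization]
  rcases Nat.lt_or_ge q 2 with hq | hq
  · interval_cases q <;> simp [ptSubpacketization]
  have hmq : 2 ≤ m * q := le_mul_of_one_le_of_le hm hq
  suffices h : ((2 * ptSubpacketization m q : ℕ) : ℚ) = (m * q * (q - 1) * (m * q - 2) : ℕ) by
    exact_mod_cast h
  push_cast [ptSubpacketization, Nat.cast_sub hq, Nat.cast_sub (by omega : 1 ≤ q),
    Nat.cast_sub hmq, Nat.cast_choose_two]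
  ring

theorem strictMono_mul_div_two {a : ℕ} (ha : 2 ≤ a) : StrictMono (fun n => a * n / 2) :=
  strictMono_nat_of_lt_succ fun n => by
    rw [mul_add_one]
    omega

theorem cast_mul_choose_sub_two (K : ℕ) (hK : 2 ≤ K) :
    (((K - 2) * K.choose (K - 2) : ℕ) : ℚ) = (K - 2) * (K * (K - 1) / 2) := by
  rw [Nat.choose_symm hK]
  push_cast [Nat.cast_sub hK, Nat.cast_choose_two]
  ring

/-- Lemma 2: for `K = mq` with `m, q ≥ 2`, the PT subpacketization with `t̄ = 2` under
the equal grouping into `m` groups of size `q` equals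
`(q−2)·m·C(q,2) + (q−1)·C(m,2)·q² = K(q−1)(K−2)/2`; among all factorizations `K = m'q'`
with `m', q' ≥ 2` this quantity is minimized exactly at `q' = 2`, where it equals
`K(K−2)/2`; and dividing by `F_JCM = (K−2)·C(K,K−2)` gives the ratio `(q−1)/(K−1)`. -/
theorem stmt_5 (m q : ℕ) (hm : 2 ≤ m) (hq : 2 ≤ q) (K : ℕ) (hK : K = m * q) :
    (q - 2) * m * Nat.choose q 2 + (q - 1) * Nat.choose m 2 * q ^ 2
        = K * (q - 1) * (K - 2) / 2 ∧
    (∀ m' q' : ℕ, 2 ≤ m' → 2 ≤ q' → m' * q' = K →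
      K * (K - 2) / 2 ≤ K * (q' - 1) * (K - 2) / 2 ∧
      (K * (q' - 1) * (K - 2) / 2 = K * (K - 2) / 2 ↔ q' = 2)) ∧
    ((K * (q - 1) * (K - 2) / 2 : ℕ) : ℚ) / (((K - 2) * Nat.choose K (K - 2) : ℕ) : ℚ)
        = ((q : ℚ) - 1) / ((K : ℚ) - 1) := by
  have hK4 : 4 ≤ K := hK ▸ Nat.mul_le_mul hm hq
  have hdouble : 2 * ptSubpacketization m q = K * (q - 1) * (K - 2) := by
    rw [two_mul_ptSubpacketization, hK]
  refine ⟨show ptSubpacketization m q = _ by omega, fun m' q' _ hq' _ => ?_, ?_⟩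
  · have hmono := strictMono_mul_div_two (a := K * (K - 2))
      (le_trans (by norm_num) (Nat.mul_le_mul hK4 (by omega : 2 ≤ K - 2)))
    have hle := hmono.monotone (show 1 ≤ q' - 1 by omega)
    have heq := hmono.injective.eq_iff (a := q' - 1) (b := 1)
    simp only [mul_one, mul_right_comm K _ (K - 2)] at hle heq ⊢
    exact ⟨hle, heq.trans (by omega)⟩
  · rw [Nat.cast_div (hdouble ▸ dvd_mul_right 2 _) two_ne_zero, cast_mul_choose_sub_two K (by omega)]
    have hKQ : (4 : ℚ) ≤ K := by exact_mod_cast hK4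
    push_cast [Nat.cast_sub (by omega : 2 ≤ K), Nat.cast_sub (by omega : 1 ≤ q)]
    have : (K : ℚ) - 2 ≠ 0 := by linarith
    have : (K : ℚ) - 1 ≠ 0 := by linarith
    field_simp
end

section
/- Let q, m, t be natural numbers, K = qm, and let S be a K-element set partitioned into m blocks each of size q. For a subset T ⊆ S, define type(T) as the multiset of intersection sizes {|T ∩ B| : B a block}. Then for every multiset v of natural numbers and every element x ∈ S: K · |{T ⊆ S : |T| = t, type(T) = v, x ∈ T}| = t · |{T ⊆ S : |T| = t, type(T) = v}|. In particular, every element of S is contained in exactly a fraction t/K of the t-subsets of any given type. -/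
/-!
A uniform partition of `α` into blocks `P` of size `q` is isomorphic to the product partition
of `P × Fin q` into the rows `{B} × Fin q`, so the permutations of `α` that permute the blocks act
transitively on `α`; they preserve the size and the type of a subset. Hence every point lies in
the same number `c` of `t`-subsets of type `v`, and double counting the incidences `x ∈ T` gives
`K * c = t * #{T | #T = t, type T = v}`.
-/

open Finset Equiv

variable {α : Type*}

theorem exists_equiv_prod_fin_of_card_fiber [Fintype α] {β : Type*} [DecidableEq β] {q : ℕ}
    (f : α → β) (hf : ∀ b, #{a | f a = b} = q) :
    ∃ φ : α ≃ β × Fin q, ∀ a, (φ a).1 = f a := by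
  let e b : {a // f a = b} ≃ Fin q :=
    Fintype.equivFinOfCardEq (by rw [Fintype.card_subtype]; exact hf b)
  exact ⟨(sigmaFiberEquiv f).symm.trans ((sigmaCongrRight e).trans (sigmaEquivProd β (Fin q))),
    fun a => rfl⟩

theorem exists_equiv_blocks_prod_fin [Fintype α] [DecidableEq α] {P : Finset (Finset α)} {q : ℕ}
    (hblock : ∀ B ∈ P, #B = q) (hdisj : ∀ B ∈ P, ∀ B' ∈ P, B ≠ B' → Disjoint B B')
    (hcover : ∀ x : α, ∃ B ∈ P, x ∈ B) :
    ∃ φ : α ≃ P × Fin q, ∀ a (B : P), a ∈ (B : Finset α) ↔ (φ a).1 = B := by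
  choose f hfP hmem_f using hcover
  let b (a : α) : P := ⟨f a, hfP a⟩
  have hmem a (B : P) : a ∈ (B : Finset α) ↔ b a = B := by
    refine ⟨fun ha => Subtype.ext ?_, fun h => h ▸ hmem_f a⟩
    by_contra hne
    exact disjoint_left.1 (hdisj _ (hfP a) _ B.2 hne) (hmem_f a) ha
  obtain ⟨φ, hφ⟩ := exists_equiv_prod_fin_of_card_fiber (q := q) b fun B => by
    rw [← hblock B B.2]
    congr 1
    ext a
    simp [hmem]
  exact ⟨φ, fun a B => by rw [hφ, hmem]⟩

theorem map_card_inter_map_eq [DecidableEq α] {P : Finset (Finset α)} (σ : Perm α)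
    (hσ : ∀ B ∈ P, B.map σ.toEmbedding ∈ P) (T : Finset α) :
    P.val.map (fun B => #(B ∩ T.map σ.toEmbedding)) = P.val.map (fun B => #(B ∩ T)) := by
  let e : Finset α ↪ Finset α := ⟨fun B => B.map σ.toEmbedding, map_injective _⟩
  have hP : P.map e = P :=
    eq_of_subset_of_card_le (by simpa [subset_iff, e] using hσ) (card_map e).ge
  conv_lhs => rw [← hP, map_val, Multiset.map_map]
  simp [e, ← map_inter]

theorem exists_perm_apply_eq_forall_map_mem [Fintype α] [DecidableEq α] {P : Finset (Finset α)}
    {q : ℕ} (hblock : ∀ B ∈ P, #B = q) (hdisj : ∀ B ∈ P, ∀ B' ∈ P, B ≠ B' → Disjoint B B')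
    (hcover : ∀ x : α, ∃ B ∈ P, x ∈ B) (x y : α) :
    ∃ σ : Perm α, σ x = y ∧ ∀ B ∈ P, B.map σ.toEmbedding ∈ P := by
  obtain ⟨φ, hφ⟩ := exists_equiv_blocks_prod_fin hblock hdisj hcover
  let π := swap (φ x).1 (φ y).1
  let σ := (φ.trans (π.prodCongr (swap (φ x).2 (φ y).2))).trans φ.symm
  refine ⟨σ, by simp [σ, π, symm_apply_eq, Prod.ext_iff], fun B hB => ?_⟩
  have : B.map σ.toEmbedding = π ⟨B, hB⟩ := by
    ext z
    rw [mem_map_equiv, hφ _ ⟨B, hB⟩, hφ]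
    simp [σ, π, swap_apply_eq_iff]
  exact this ▸ (π ⟨B, hB⟩).2

theorem card_mul_card_filter_mem_eq [Fintype α] [DecidableEq α] {𝒜 : Finset (Finset α)} {t : ℕ}
    (hcard : ∀ T ∈ 𝒜, #T = t)
    (htrans : ∀ x y : α, ∃ σ : Perm α, σ x = y ∧ ∀ T ∈ 𝒜, T.map σ.toEmbedding ∈ 𝒜) (x : α) :
    Fintype.card α * #{T ∈ 𝒜 | x ∈ T} = t * #𝒜 := by
  have hle x y : #{T ∈ 𝒜 | x ∈ T} ≤ #{T ∈ 𝒜 | y ∈ T} := by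
    obtain ⟨σ, rfl, hσ⟩ := htrans x y
    refine card_le_card_of_injOn (fun T => T.map σ.toEmbedding) (fun T hT => ?_)
      (map_injective _).injOn
    simp only [mem_coe, mem_filter] at hT ⊢
    exact ⟨hσ T hT.1, mem_map_of_mem _ hT.2⟩
  rw [← sum_card fun y => (hle y x).antisymm (hle x y), sum_const_nat hcard, mul_comm]

/-- Cache-memory counting identity: for a `K`-element set (`K = qm`) partitioned into
`m` blocks of size `q`, with `type(T)` the multiset of block-intersection sizes, every
element `x` lies in exactly a fraction `t/K` of the `t`-subsets of any given type `v`: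
`K · #{T : |T| = t, type(T) = v, x ∈ T} = t · #{T : |T| = t, type(T) = v}`. -/
theorem stmt_6 (q m t K : ℕ) (hK : K = q * m)
    (α : Type) [Fintype α] [DecidableEq α]
    (P : Finset (Finset α)) (hP : P.card = m)
    (hblock : ∀ B ∈ P, B.card = q)
    (hdisj : ∀ B ∈ P, ∀ B' ∈ P, B ≠ B' → Disjoint B B')
    (hcover : ∀ x : α, ∃ B ∈ P, x ∈ B)
    (v : Multiset ℕ) (x : α) :
    K * Nat.card {T : Finset α //
        T.card = t ∧ Multiset.map (fun B => (B ∩ T).card) P.val = v ∧ x ∈ T}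
      = t * Nat.card {T : Finset α //
          T.card = t ∧ Multiset.map (fun B => (B ∩ T).card) P.val = v} := by
  obtain ⟨φ, -⟩ := exists_equiv_blocks_prod_fin hblock hdisj hcover
  have hcard : Fintype.card α = K := by
    rw [Fintype.card_congr φ, Fintype.card_prod, Fintype.card_coe, Fintype.card_fin, hP, hK,
      mul_comm]
  let 𝒜 : Finset (Finset α) := {T | #T = t ∧ P.val.map (fun B => #(B ∩ T)) = v}
  have htrans : ∀ y z : α, ∃ σ : Perm α, σ y = z ∧ ∀ T ∈ 𝒜, T.map σ.toEmbedding ∈ 𝒜 := by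
    intro y z
    obtain ⟨σ, hσ, hσP⟩ := exists_perm_apply_eq_forall_map_mem hblock hdisj hcover y z
    refine ⟨σ, hσ, fun T hT => ?_⟩
    simpa only [𝒜, mem_filter, mem_univ, true_and, card_map, map_card_inter_map_eq σ hσP] using hT
  have hcard𝒜 : ∀ T ∈ 𝒜, #T = t := fun T hT => (mem_filter.1 hT).2.1
  rw [← hcard, Nat.card_eq_fintype_card, Nat.card_eq_fintype_card, Fintype.card_subtype,
    Fintype.card_subtype, ← card_mul_card_filter_mem_eq hcard𝒜 htrans x, filter_filter]
  simp only [and_assoc]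
end

section
/- Let q, r ≥ 1 be natural numbers with 2r ≤ q − 1. Then ∑_{i=1}^{r} (i−1) · 2 · C(q, i−1) · C(q, 2r−i+1) + r · C(q, r)² ≤ r · C(2q, 2r). In particular, for K = 2q users and even t = 2r ≤ K/2 − 1, the PT design under the grouping (K/2, K/2) with global further-splitting factors (0, 1, 2, …, r) achieves subpacketization F_PT ≤ (1/2) · F_JCM, where F_JCM = t · C(K, t). -/
/-!
Put `a j = C(q, j) · C(q, 2r − j)`. After the shift `j = i − 1` the left side is
`∑_{j<r} 2j·a j + r·a r`, while Vandermonde gives `C(2q, 2r) = ∑_{j ≤ 2r} a j`, and the symmetry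
`a (2r − j) = a j` folds this into `2 ∑_{j<r} a j + a r`. Bounding each weight `2j` by `2r`
finishes the proof.
-/

open Finset

theorem Nat.choose_add_eq_sum_range (m n k : ℕ) :
    (m + n).choose k = ∑ j ∈ range (k + 1), m.choose j * n.choose (k - j) := by
  rw [Nat.add_choose_eq, Nat.sum_antidiagonal_eq_sum_range_succ (fun i j => m.choose i * n.choose j)]

theorem Finset.sum_range_two_mul_add_one_of_symm {M : Type*} [AddCommMonoid M] (f : ℕ → M) (r : ℕ)
    (hf : ∀ j ≤ 2 * r, f (2 * r - j) = f j) :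
    ∑ j ∈ range (2 * r + 1), f j = 2 • ∑ j ∈ range r, f j + f r := by
  have upper_half : ∑ j ∈ range r, f (r + 1 + j) = ∑ j ∈ range r, f j := by
    rw [← sum_range_reflect]
    refine sum_congr rfl fun j hj => ?_
    have hj : j < r := mem_range.mp hj
    rw [show r + 1 + (r - 1 - j) = 2 * r - j by omega, hf j (by omega)]
  rw [show 2 * r + 1 = (r + 1) + r by ring, sum_range_add, upper_half, sum_range_succ, two_nsmul]
  abel

theorem sum_Icc_shift_choose_mul_choose (q r : ℕ) :
    ∑ i ∈ Icc 1 r, (i - 1) * 2 * q.choose (i - 1) * q.choose (2 * r - i + 1)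
      = ∑ j ∈ range r, 2 * j * (q.choose j * q.choose (2 * r - j)) := by
  rw [← Ico_add_one_right_eq_Icc, sum_Ico_eq_sum_range, Nat.add_sub_cancel]
  refine sum_congr rfl fun j hj => ?_
  have hj : j < r := mem_range.mp hj
  rw [show 1 + j - 1 = j by omega, show 2 * r - (1 + j) + 1 = 2 * r - j by omega]
  ring

theorem sum_range_two_mul_mul_add_le_of_symm (a : ℕ → ℕ) (r : ℕ)
    (ha : ∀ j ≤ 2 * r, a (2 * r - j) = a j) :
    ∑ j ∈ range r, 2 * j * a j + r * a r ≤ r * ∑ j ∈ range (2 * r + 1), a j := by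
  rw [sum_range_two_mul_add_one_of_symm a r ha, smul_eq_mul, mul_add, mul_sum, mul_sum]
  refine Nat.add_le_add_right (sum_le_sum fun j hj => ?_) _
  calc 2 * j * a j ≤ 2 * r * a j := by gcongr; exact (mem_range.mp hj).le
    _ = r * (2 * a j) := by ring

theorem stmt_9_general (q r : ℕ) :
    ∑ i ∈ Finset.Icc 1 r,
        (i - 1) * 2 * Nat.choose q (i - 1) * Nat.choose q (2 * r - i + 1)
        + r * Nat.choose q r ^ 2
      ≤ r * Nat.choose (2 * q) (2 * r) := by
  have symm : ∀ j ≤ 2 * r, q.choose (2 * r - j) * q.choose (2 * r - (2 * r - j))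
      = q.choose j * q.choose (2 * r - j) := fun j hj => by
    rw [Nat.sub_sub_self hj, mul_comm]
  have mid : q.choose r ^ 2 = q.choose r * q.choose (2 * r - r) := by
    rw [sq, show 2 * r - r = r by omega]
  rw [sum_Icc_shift_choose_mul_choose, mid, two_mul q, Nat.choose_add_eq_sum_range]
  exact sum_range_two_mul_mul_add_le_of_symm (fun j => q.choose j * q.choose (2 * r - j)) r symm

/-- Theorem 2, Case 1 (`t = 2r ≤ K/2 − 1`, `K = 2q`): the two-group PT design with
global further-splitting factors `(0, 1, …, r)` satisfies
`∑_{i=1}^{r} (i−1)·2·C(q, i−1)·C(q, 2r−i+1) + r·C(q, r)² ≤ r·C(2q, 2r)`,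
i.e. `F_PT ≤ (1/2)·F_JCM` with `F_JCM = t·C(K, t)`. -/
theorem stmt_9 (q r : ℕ) (hq : 1 ≤ q) (hr : 1 ≤ r) (h : 2 * r ≤ q - 1) :
    ∑ i ∈ Finset.Icc 1 r,
        (i - 1) * 2 * Nat.choose q (i - 1) * Nat.choose q (2 * r - i + 1)
        + r * Nat.choose q r ^ 2
      ≤ r * Nat.choose (2 * q) (2 * r) :=
  stmt_9_general q r
end

section
/- Let q and r be natural numbers with q ≤ 2r and r ≤ q. Then ∑_{i=1}^{q−r} (2r−q+i−1) · 2 · C(q, 2r−q+i−1) · C(q, q−i+1) + r · C(q, r)² ≤ r · C(2q, 2r). In particular, for K = 2q users and even t = 2r ≥ K/2, the PT design under the grouping (K/2, K/2) with global further-splitting factors (t+1−K/2−1, …, r−1, r) achieves subpacketization F_PT ≤ (1/2) · F_JCM, where F_JCM = t · C(K, t). -/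
/-!
By Vandermonde, `C(2q, 2r) = ∑_{j ≤ 2r} C(q, j) C(q, 2r - j)`. Weighting the `j`-th term by
`min j (2r - j) ≤ r` gives a sum symmetric under `j ↦ 2r - j`, equal to twice its part over
`j < r` plus the middle term `r C(q, r)²`. The terms with `j < 2r - q` vanish, and the remaining
ones, indexed by `j = 2r - q + i - 1`, are exactly the summands on the left.
-/

open Finset

theorem Nat.sum_range_min_mul_choose_le (m n r : ℕ) :
    ∑ j ∈ range (2 * r + 1), min j (2 * r - j) * (m.choose j * n.choose (2 * r - j))
      ≤ r * (m + n).choose (2 * r) := by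
  rw [Nat.add_choose_eq, Finset.Nat.sum_antidiagonal_eq_sum_range_succ_mk, mul_sum]
  exact sum_le_sum fun j _ => Nat.mul_le_mul_right _ (by omega)

theorem Nat.sum_range_mul_choose_eq_sum_Icc (q r : ℕ) (h1 : q ≤ 2 * r) (h2 : r ≤ q) :
    2 * ∑ j ∈ range r, j * (q.choose j * q.choose (2 * r - j))
      = ∑ i ∈ Icc 1 (q - r),
          (2 * r - q + i - 1) * 2 * q.choose (2 * r - q + i - 1) * q.choose (q - i + 1) := by
  have vanish : ∑ j ∈ range (2 * r - q), j * (q.choose j * q.choose (2 * r - j)) = 0 :=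
    sum_eq_zero fun j hj => by
      rw [Nat.choose_eq_zero_of_lt (n := q) (k := 2 * r - j) (by have := mem_range.mp hj; omega)]
      simp
  rw [← sum_range_add_sum_Ico _ (by omega : 2 * r - q ≤ r), vanish, zero_add,
    sum_Ico_eq_sum_range, ← Finset.Ico_add_one_right_eq_Icc, sum_Ico_eq_sum_range, mul_sum,
    show r - (2 * r - q) = q - r by omega, show q - r + 1 - 1 = q - r by omega]
  refine sum_congr rfl fun k hk => ?_
  have hk : k < q - r := mem_range.mp hk
  rw [show 2 * r - q + (1 + k) - 1 = 2 * r - q + k by omega,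
    show q - (1 + k) + 1 = 2 * r - (2 * r - q + k) by omega]
  ring

/-- Theorem 2, Case 2 (`t = 2r ≥ K/2`, `K = 2q`): the two-group PT design with global
further-splitting factors `(t+1−K/2−1, …, r−1, r)` satisfies
`∑_{i=1}^{q−r} (2r−q+i−1)·2·C(q, 2r−q+i−1)·C(q, q−i+1) + r·C(q, r)² ≤ r·C(2q, 2r)`,
i.e. `F_PT ≤ (1/2)·F_JCM` with `F_JCM = t·C(K, t)`. -/
theorem stmt_11 (q r : ℕ) (h1 : q ≤ 2 * r) (h2 : r ≤ q) :
    ∑ i ∈ Finset.Icc 1 (q - r),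
        (2 * r - q + i - 1) * 2 * Nat.choose q (2 * r - q + i - 1) * Nat.choose q (q - i + 1)
        + r * Nat.choose q r ^ 2
      ≤ r * Nat.choose (2 * q) (2 * r) := by
  set w : ℕ → ℕ := fun j => min j (2 * r - j) * (q.choose j * q.choose (2 * r - j))
  have w_symm : ∀ j ≤ 2 * r, w (2 * r - j) = w j := fun j hj => by
    simp only [w, Nat.sub_sub_self hj]
    rw [min_comm, mul_comm (q.choose _)]
  have w_lt : ∀ j ∈ range r, w j = j * (q.choose j * q.choose (2 * r - j)) := fun j hj => by
    simp only [w, min_eq_left (by simp at hj; omega : j ≤ 2 * r - j)]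
  have w_mid : w r = r * q.choose r ^ 2 := by
    simp only [w, show 2 * r - r = r by omega, min_self, sq]
  calc _ = ∑ j ∈ range (2 * r + 1), w j := by
        rw [sum_range_two_mul_add_one_of_symm w r w_symm, sum_congr rfl w_lt, w_mid, smul_eq_mul,
          Nat.sum_range_mul_choose_eq_sum_Icc q r h1 h2]
    _ ≤ r * (q + q).choose (2 * r) := Nat.sum_range_min_mul_choose_le q q r
    _ = r * (2 * q).choose (2 * r) := by rw [two_mul q]
end

section
/- Let m, q, t be natural numbers with 2 ≤ t, t + 1 ≤ m, and t + 1 ≤ q, and let K = mq. Then 0 < m · C(q, t) < C(K, t), and as rational numbers, (m · C(q, t)) / C(K, t) = (m · ∏_{i=0}^{t−1}(q−i)) / (∏_{i=0}^{t−1}(K−i)). Consequently, the PT design subpacketization F_PT = t · C(K, t) − t · m · C(q, t) satisfies 0 < F_PT < F_JCM and F_PT / F_JCM = 1 − (m · ∏_{i=0}^{t−1}(q−i)) / (∏_{i=0}^{t−1}(K−i)) < 1, where F_JCM = t · C(K, t). -/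
/-! Writing `C(n, t) = n(n-1)⋯(n-t+1) / t!`, the ratio `m·C(q, t) / C(mq, t)` becomes
`m·∏(q - i) / ∏(mq - i)`. Factor by factor `m(q - i) ≤ mq - i`, so `m^t·∏(q - i) ≤ ∏(mq - i)`,
and `m < m^t` for `m, t ≥ 2` makes the ratio strictly smaller than `1`; everything about
`F_PT = t·C(K, t) - t·m·C(q, t)` then follows from `0 < m·C(q, t) < C(K, t)`. -/

open Finset

theorem Nat.cast_descFactorial_eq_prod_range {R : Type*} [CommRing R] (n k : ℕ) :
    (n.descFactorial k : R) = ∏ i ∈ range k, ((n : R) - i) := by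
  rw [← descPochhammer_eval_eq_descFactorial, descPochhammer_eval_eq_prod_range]

theorem Nat.pow_mul_descFactorial_le_descFactorial_mul (m q t : ℕ) :
    m ^ t * q.descFactorial t ≤ (m * q).descFactorial t := by
  have hpow : m ^ t = ∏ _ ∈ range t, m := by simp
  rw [Nat.descFactorial_eq_prod_range, Nat.descFactorial_eq_prod_range, hpow,
    ← prod_mul_distrib]
  refine prod_le_prod' fun i _ => ?_
  rcases Nat.eq_zero_or_pos m with rfl | hm
  · simp
  · have : i ≤ m * i := Nat.le_mul_of_pos_left i hm
    rw [Nat.mul_sub]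
    omega

theorem Nat.mul_descFactorial_lt_descFactorial_mul {m q t : ℕ} (hm : 2 ≤ m) (ht : 2 ≤ t)
    (htq : t ≤ q) : m * q.descFactorial t < (m * q).descFactorial t :=
  calc m * q.descFactorial t < m ^ t * q.descFactorial t :=
        Nat.mul_lt_mul_of_pos_right (lt_self_pow₀ hm ht) (Nat.descFactorial_pos.mpr htq)
    _ ≤ (m * q).descFactorial t := Nat.pow_mul_descFactorial_le_descFactorial_mul m q t

theorem Nat.mul_choose_lt_choose_mul {m q t : ℕ} (hm : 2 ≤ m) (ht : 2 ≤ t) (htq : t ≤ q) :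
    m * q.choose t < (m * q).choose t := by
  have h := Nat.mul_descFactorial_lt_descFactorial_mul hm ht htq
  rw [Nat.descFactorial_eq_factorial_mul_choose, Nat.descFactorial_eq_factorial_mul_choose,
    Nat.mul_left_comm] at h
  exact Nat.lt_of_mul_lt_mul_left h

theorem Nat.cast_mul_choose_div_choose {𝕜 : Type*} [Field 𝕜] [CharZero 𝕜] (a n k t : ℕ) :
    ((a * n.choose t : ℕ) : 𝕜) / (k.choose t : 𝕜) =
      (a * n.descFactorial t : 𝕜) / k.descFactorial t := by
  simp only [Nat.descFactorial_eq_factorial_mul_choose, Nat.cast_mul, mul_left_comm (a : 𝕜)]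
  rw [mul_div_mul_left _ _ (by exact_mod_cast t.factorial_ne_zero)]

theorem Nat.cast_mul_sub_mul_div_mul {𝕜 : Type*} [Field 𝕜] [CharZero 𝕜] {a b t : ℕ}
    (hab : a ≤ b) (hb : b ≠ 0) (ht : t ≠ 0) :
    ((t * b - t * a : ℕ) : 𝕜) / (t * b : ℕ) = 1 - (a : 𝕜) / b := by
  rw [Nat.cast_sub (Nat.mul_le_mul_left t hab), sub_div, div_self (by positivity)]
  push_cast
  rw [mul_div_mul_left _ _ (by exact_mod_cast ht)]

/-- Theorem 3 (constant-factor reduction): for `K = mq` with `2 ≤ t`, `t+1 ≤ m`,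
`t+1 ≤ q`, we have `0 < m·C(q,t) < C(K,t)`,
`(m·C(q,t))/C(K,t) = (m·∏_{i=0}^{t−1}(q−i))/(∏_{i=0}^{t−1}(K−i))` as rationals, and
consequently `F_PT = t·C(K,t) − t·m·C(q,t)` satisfies `0 < F_PT < F_JCM` and
`F_PT/F_JCM = 1 − (m·∏_{i=0}^{t−1}(q−i))/(∏_{i=0}^{t−1}(K−i)) < 1`,
where `F_JCM = t·C(K,t)`. -/
theorem stmt_12 (m q t : ℕ) (ht : 2 ≤ t) (htm : t + 1 ≤ m) (htq : t + 1 ≤ q)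
    (K : ℕ) (hK : K = m * q) :
    0 < m * Nat.choose q t ∧
    m * Nat.choose q t < Nat.choose K t ∧
    ((m * Nat.choose q t : ℕ) : ℚ) / ((Nat.choose K t : ℕ) : ℚ)
      = ((m : ℚ) * ∏ i ∈ Finset.range t, ((q : ℚ) - (i : ℚ))) /
        (∏ i ∈ Finset.range t, ((K : ℚ) - (i : ℚ))) ∧
    0 < t * Nat.choose K t - t * (m * Nat.choose q t) ∧
    t * Nat.choose K t - t * (m * Nat.choose q t) < t * Nat.choose K t ∧
    ((t * Nat.choose K t - t * (m * Nat.choose q t) : ℕ) : ℚ) /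
        ((t * Nat.choose K t : ℕ) : ℚ)
      = 1 - ((m : ℚ) * ∏ i ∈ Finset.range t, ((q : ℚ) - (i : ℚ))) /
            (∏ i ∈ Finset.range t, ((K : ℚ) - (i : ℚ))) ∧
    1 - ((m : ℚ) * ∏ i ∈ Finset.range t, ((q : ℚ) - (i : ℚ))) /
        (∏ i ∈ Finset.range t, ((K : ℚ) - (i : ℚ))) < 1 := by
  subst hK
  have hpos : 0 < m * q.choose t := Nat.mul_pos (by omega) (Nat.choose_pos (by omega))
  have hlt : m * q.choose t < (m * q).choose t :=
    Nat.mul_choose_lt_choose_mul (by omega) ht (by omega)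
  have hratio : ((m * q.choose t : ℕ) : ℚ) / ((m * q).choose t : ℕ) =
      (m * ∏ i ∈ range t, ((q : ℚ) - i)) / ∏ i ∈ range t, (((m * q : ℕ) : ℚ) - i) := by
    rw [Nat.cast_mul_choose_div_choose, Nat.cast_descFactorial_eq_prod_range,
      Nat.cast_descFactorial_eq_prod_range]
  have hmul : t * (m * q.choose t) < t * (m * q).choose t :=
    Nat.mul_lt_mul_of_pos_left hlt (by omega)
  refine ⟨hpos, hlt, hratio, by omega, Nat.sub_lt (by omega) (Nat.mul_pos (by omega) hpos), ?_, ?_⟩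
  · rw [← hratio, Nat.cast_mul_sub_mul_div_mul hlt.le (by omega) (by omega)]
  · rw [← hratio]
    exact sub_lt_self _ (div_pos (by exact_mod_cast hpos) (by exact_mod_cast hpos.trans hlt))
end

section
/- Let m ≥ 2, q, t be natural numbers with 1 ≤ t ≤ q, and let K = mq. Then m · t · C(q, t) = K · C(q−1, t−1); moreover, if K is even, then m · t · C(q, t) ≤ 2 · t · C(K/2, t). In particular, among all factorizations K = mq with m ≥ 2, the subfile-exclusion saving m·t·C(q,t) = F_JCM − F_PT of the Theorem-3 PT design is maximized by the two-group factorization m = 2 (equivalently q = K/2). -/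
/-!
Absorption `t·C(q,t) = q·C(q−1,t−1)` turns the saving into `K·C(q−1,t−1)`, in which only the
binomial depends on the factorization; it grows with `q`, and `m ≥ 2` forces `q ≤ K/2`.
-/

theorem Nat.mul_choose_eq_mul_choose_pred (q : ℕ) {t : ℕ} (ht : 1 ≤ t) :
    t * q.choose t = q * (q - 1).choose (t - 1) := by
  obtain ⟨t, rfl⟩ := Nat.exists_eq_add_of_le' ht
  rcases q with _ | q
  · simp
  rw [Nat.add_sub_cancel, Nat.add_sub_cancel, Nat.add_one_mul_choose_eq, mul_comm]

theorem Nat.mul_mul_choose_le_of_mul_eq_two_mul {m q n t : ℕ} (hm : 2 ≤ m) (ht : 1 ≤ t)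
    (hmq : m * q = 2 * n) : m * t * q.choose t ≤ 2 * t * n.choose t := by
  have hqn : q ≤ n := by nlinarith
  calc m * t * q.choose t = 2 * n * (q - 1).choose (t - 1) := by
        rw [mul_assoc, Nat.mul_choose_eq_mul_choose_pred q ht, ← mul_assoc, hmq]
    _ ≤ 2 * n * (n - 1).choose (t - 1) := by gcongr
    _ = 2 * t * n.choose t := by
        rw [mul_assoc 2 t, Nat.mul_choose_eq_mul_choose_pred n ht, mul_assoc]

theorem stmt_14_general (m q t : ℕ) (hm : 2 ≤ m) (ht : 1 ≤ t)
    (K : ℕ) (hK : K = m * q) :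
    m * t * Nat.choose q t = K * Nat.choose (q - 1) (t - 1) ∧
    (Even K → m * t * Nat.choose q t ≤ 2 * t * Nat.choose (K / 2) t) := by
  subst hK
  refine ⟨by rw [mul_assoc, Nat.mul_choose_eq_mul_choose_pred q ht, mul_assoc], fun hEven => ?_⟩
  exact Nat.mul_mul_choose_le_of_mul_eq_two_mul hm ht (Nat.two_mul_div_two_of_even hEven).symm

/-- The subfile-exclusion saving of the Theorem-3 PT design: for `K = mq`, `m ≥ 2`,
`1 ≤ t ≤ q`, we have `m·t·C(q,t) = K·C(q−1,t−1)`, and if `K` is even then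
`m·t·C(q,t) ≤ 2·t·C(K/2,t)`; i.e. the saving `F_JCM − F_PT = m·t·C(q,t)` is maximized
by the two-group factorization `m = 2`. -/
theorem stmt_14 (m q t : ℕ) (hm : 2 ≤ m) (ht : 1 ≤ t) (htq : t ≤ q)
    (K : ℕ) (hK : K = m * q) :
    m * t * Nat.choose q t = K * Nat.choose (q - 1) (t - 1) ∧
    (Even K → m * t * Nat.choose q t ≤ 2 * t * Nat.choose (K / 2) t) :=
  stmt_14_general m q t hm ht K hK
end

section
/- Let m ≥ 3 be a natural number and K = 3m. Then 4 · 27 · C(m, 3) + 3 · 9 · m(m−1) = 9 m(m−1)(2m−1) = K(K−3)(2K−3)/3, and as rational numbers, this quantity divided by (K−3) · C(K, 3) equals 2(2K−3) / ((K−1)(K−2)); in particular the ratio is Θ(4/K), an order-wise reduction. -/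
/-! Both binomial coefficients are cubic polynomials, `6·C(n,3) = n(n-1)(n-2)`, so every identity is a
polynomial identity once the truncated subtractions are resolved; the ratio is `4K²/K³` to leading
order. -/

open Filter Topology

theorem Nat.cast_choose_three {𝕜 : Type*} [Field 𝕜] [CharZero 𝕜] (n : ℕ) :
    (n.choose 3 : 𝕜) = n * (n - 1) * (n - 2) / 6 := by
  rw [Nat.cast_choose_eq_descPochhammer_div]
  simp [descPochhammer_succ_eval, Nat.factorial]

theorem Nat.six_mul_choose_three (n : ℕ) : 6 * n.choose 3 = n * (n - 1) * (n - 2) := by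
  rw [show 6 = Nat.factorial 3 from rfl, ← Nat.descFactorial_eq_factorial_mul_choose]
  simp only [Nat.descFactorial_succ, Nat.descFactorial_zero, Nat.sub_zero]
  ring

theorem four_mul_choose_three_add_three_mul_eq (m : ℕ) :
    4 * 27 * m.choose 3 + 3 * 9 * (m * (m - 1)) = 9 * m * (m - 1) * (2 * m - 1) := by
  obtain _ | _ | a := m
  · rfl
  · rfl
  · have h := Nat.six_mul_choose_three (a + 2)
    rw [show a + 2 - 1 = a + 1 by omega, Nat.add_sub_cancel] at h
    rw [show 2 * (a + 2) - 1 = 2 * a + 3 by omega, show a + 2 - 1 = a + 1 by omega]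
    calc 4 * 27 * (a + 2).choose 3 + 3 * 9 * ((a + 2) * (a + 1))
        = 18 * (6 * (a + 2).choose 3) + 27 * ((a + 2) * (a + 1)) := by ring
      _ = _ := by rw [h]; ring

theorem three_mul_sub_three_div_three (m : ℕ) :
    3 * m * (3 * m - 3) * (2 * (3 * m) - 3) / 3 = 9 * m * (m - 1) * (2 * m - 1) := by
  have h : 3 * m * (3 * m - 3) * (2 * (3 * m) - 3) = 3 * (9 * m * (m - 1) * (2 * m - 1)) := by
    rw [show 2 * (3 * m) - 3 = 3 * (2 * m - 1) by omega, show 3 * m - 3 = 3 * (m - 1) by omega]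
    ring
  rw [h, Nat.mul_div_cancel_left _ three_pos]

theorem div_mul_choose_three_eq {𝕜 : Type*} [Field 𝕜] [CharZero 𝕜] {n : ℕ} (hn : 4 ≤ n) :
    (n : 𝕜) * (n - 3) * (2 * n - 3) / 3 / ((n - 3) * n.choose 3)
      = 2 * (2 * n - 3) / ((n - 1) * (n - 2)) := by
  have h0 : (n : 𝕜) ≠ 0 := by norm_cast; omega
  have h1 : (n : 𝕜) - 1 ≠ 0 := sub_ne_zero.2 (by norm_cast; omega)
  have h2 : (n : 𝕜) - 2 ≠ 0 := sub_ne_zero.2 (by norm_cast; omega)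
  have h3 : (n : 𝕜) - 3 ≠ 0 := sub_ne_zero.2 (by norm_cast; omega)
  rw [Nat.cast_choose_three]
  field_simp
  ring

theorem tendsto_mul_two_mul_div : Tendsto
    (fun n : ℕ => (n : ℝ) * (2 * (2 * (n : ℝ) - 3) / (((n : ℝ) - 1) * ((n : ℝ) - 2))))
    atTop (𝓝 4) := by
  have h := tendsto_one_div_atTop_nhds_zero_nat (𝕜 := ℝ)
  -- numerator and denominator divided by `n²`
  have hlim : Tendsto (fun n : ℕ => (4 - 6 * (1 / (n : ℝ))) /
      ((1 - 1 / (n : ℝ)) * (1 - 2 * (1 / (n : ℝ)))))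
      atTop (𝓝 ((4 - 6 * 0) / ((1 - 0) * (1 - 2 * 0)))) :=
    (tendsto_const_nhds.sub (h.const_mul 6)).div
      ((tendsto_const_nhds.sub h).mul (tendsto_const_nhds.sub (h.const_mul 2))) (by norm_num)
  norm_num at hlim
  refine hlim.congr' ?_
  filter_upwards [eventually_ge_atTop 3] with n hn
  have hn : (3 : ℝ) ≤ n := by exact_mod_cast hn
  have h0 : (n : ℝ) ≠ 0 := by linarith
  have h1 : (n : ℝ) - 1 ≠ 0 := by linarith
  have h2 : (n : ℝ) - 2 ≠ 0 := by linarith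
  field_simp
  ring

/-- PT design for `t̄ = 3` under equal grouping of `K = 3m` users into `m` groups of
size `3`: `4·27·C(m,3) + 3·9·m(m−1) = 9m(m−1)(2m−1) = K(K−3)(2K−3)/3`; dividing by
`F_JCM = (K−3)·C(K,3)` gives `2(2K−3)/((K−1)(K−2))`, which is `Θ(4/K)`
(i.e. `K · ratio → 4`), an order-wise reduction. -/
theorem stmt_17 (m : ℕ) (hm : 3 ≤ m) (K : ℕ) (hK : K = 3 * m) :
    4 * 27 * Nat.choose m 3 + 3 * 9 * (m * (m - 1)) = 9 * m * (m - 1) * (2 * m - 1) ∧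
    9 * m * (m - 1) * (2 * m - 1) = K * (K - 3) * (2 * K - 3) / 3 ∧
    ((9 * m * (m - 1) * (2 * m - 1) : ℕ) : ℚ) / (((K - 3) * Nat.choose K 3 : ℕ) : ℚ)
      = 2 * (2 * (K : ℚ) - 3) / (((K : ℚ) - 1) * ((K : ℚ) - 2)) ∧
    Tendsto
      (fun n : ℕ => (n : ℝ) * (2 * (2 * (n : ℝ) - 3) / (((n : ℝ) - 1) * ((n : ℝ) - 2))))
      atTop (𝓝 4) := by
  have hnum : ((9 * m * (m - 1) * (2 * m - 1) : ℕ) : ℚ) = (K : ℚ) * (K - 3) * (2 * K - 3) / 3 := by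
    subst hK
    push_cast [Nat.cast_sub (by omega : 1 ≤ m), Nat.cast_sub (by omega : 1 ≤ 2 * m)]
    ring
  have hden : (((K - 3) * K.choose 3 : ℕ) : ℚ) = ((K : ℚ) - 3) * K.choose 3 := by
    push_cast [Nat.cast_sub (by omega : 3 ≤ K)]
    rfl
  refine ⟨four_mul_choose_three_add_three_mul_eq m, ?_, ?_, tendsto_mul_two_mul_div⟩
  · rw [hK, three_mul_sub_three_div_three]
  · rw [hnum, hden, div_mul_choose_three_eq (by omega)]
end
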